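/- arXiv:1307.5764 — 2 statements merged into one kernel-verified Lean document; each statement's English description precedes it below -/
import Mathlib

section
/- Let n ≥ 1 and let M̂ ⊆ S^{n+1} be a weakly convex body in the closed hemisphere ℋ(x₀) for some x₀ ∈ S^{n+1}. Let p ∈ M̂ ∩ 𝒮(x₀) and suppose that M̂ satisfies an interior sphere condition at p with respect to x₀. Let v be a unit vector with ⟪v,p⟫ = 0, let t₀ > 0, and set γ(t) := (cos t)p + (sin t)v; assume γ(t) ∈ int ℋ(x₀) for all t ∈ (0,t₀). Then there exists δ with 0 < δ ≤ t₀ such that γ(t) ∈ interior(M̂) for all t ∈ (0,δ). -/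
open scoped RealInnerProductSpace

noncomputable section

/-- Euclidean space `ℝ^{n+2}`. -/
abbrev Eucl (n : ℕ) : Type := EuclideanSpace ℝ (Fin (n + 2))

/-- The unit sphere `S^{n+1} ⊆ ℝ^{n+2}`, as a subtype with the subspace topology. -/
abbrev Sphere (n : ℕ) : Type := Metric.sphere (0 : Eucl n) 1

/-- The closed hemisphere centered at `x`. -/
def hemi {n : ℕ} (x : Sphere n) : Set (Sphere n) :=
  {p : Sphere n | 0 ≤ ⟪(p : Eucl n), (x : Eucl n)⟫}

/-- The open hemisphere centered at `x` (the interior of `hemi x`). -/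
def openHemi {n : ℕ} (x : Sphere n) : Set (Sphere n) :=
  {p : Sphere n | 0 < ⟪(p : Eucl n), (x : Eucl n)⟫}

/-- The equator `𝒮(x)`. -/
def equator {n : ℕ} (x : Sphere n) : Set (Sphere n) :=
  {p : Sphere n | ⟪(p : Eucl n), (x : Eucl n)⟫ = 0}

/-- `Γ` is a minimizing geodesic segment from `p` to `q` in the sphere. -/
def IsMinGeodesicSegment {n : ℕ} (p q : Sphere n) (Γ : Set (Sphere n)) : Prop :=
  ∃ v : Eucl n, ‖v‖ = 1 ∧ ⟪v, (p : Eucl n)⟫ = 0 ∧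
    Real.cos (Real.arccos ⟪(p : Eucl n), (q : Eucl n)⟫) • (p : Eucl n) +
      Real.sin (Real.arccos ⟪(p : Eucl n), (q : Eucl n)⟫) • v = (q : Eucl n) ∧
    Γ = {z : Sphere n | ∃ t ∈ Set.Icc (0 : ℝ) (Real.arccos ⟪(p : Eucl n), (q : Eucl n)⟫),
      (z : Eucl n) = Real.cos t • (p : Eucl n) + Real.sin t • v}

/-- A set is weakly convex if any two of its points are joined by some
minimizing geodesic segment contained in the set. -/
def WeaklyConvexSet {n : ℕ} (M : Set (Sphere n)) : Prop :=
  ∀ p ∈ M, ∀ q ∈ M, ∃ Γ : Set (Sphere n), IsMinGeodesicSegment p q Γ ∧ Γ ⊆ M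

/-- A set is convex if every minimizing geodesic segment joining two of its points
is contained in the set. -/
def SphConvexSet {n : ℕ} (M : Set (Sphere n)) : Prop :=
  ∀ p ∈ M, ∀ q ∈ M, ∀ Γ : Set (Sphere n), IsMinGeodesicSegment p q Γ → Γ ⊆ M

/-- Stereographic projection sending `x₀` to `0 ∈ x₀^⊥`. -/
def stereo {n : ℕ} (x₀ : Sphere n) (p : Sphere n) : Eucl n :=
  (2 / (1 + ⟪(p : Eucl n), (x₀ : Eucl n)⟫)) •
    ((p : Eucl n) - ⟪(p : Eucl n), (x₀ : Eucl n)⟫ • (x₀ : Eucl n))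

/-- `A` satisfies an interior sphere condition at `p` with respect to `x₀`:
there is a ball (of the hyperplane `x₀^⊥`) inside `stereo x₀ '' A` touching `stereo x₀ p`. -/
def IntSphereCond {n : ℕ} (x₀ : Sphere n) (A : Set (Sphere n)) (p : Sphere n) : Prop :=
  ∃ c : Eucl n, ⟪c, (x₀ : Eucl n)⟫ = 0 ∧ ∃ ρ : ℝ, 0 < ρ ∧
    {y : Eucl n | ⟪y, (x₀ : Eucl n)⟫ = 0 ∧ dist y c < ρ} ⊆ stereo x₀ '' A ∧
    ‖stereo x₀ p - c‖ = ρ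

/-!
Stereographic projection from `-x₀` maps the closed hemisphere `ℋ(x₀)` injectively into the
closed disc of radius `2` of `x₀^⊥`, and the equator onto its boundary circle, `𝒫(p) = 2p`.
The ball `B_ρ(c)` of the interior sphere condition therefore lies in that disc and touches its
boundary at `2p`, so it is internally tangent there: `c = (2 - ρ) p`. Because `⟪v, x₀⟫ > 0`,
the projected geodesic leaves `2p` pointing into the disc, and the identity
`(‖𝒫(γ t) - c‖² - ρ²)(1 + ⟪v, x₀⟫ sin t) = 4((2 - ρ)(1 - cos t) - ⟪v, x₀⟫ ρ sin t)`
shows that it enters `B_ρ(c)` for small `t > 0`. The set of points `≠ -x₀` projecting into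
`B_ρ(c)` is open and, by injectivity, contained in `M̂`, hence in its interior.
-/

open Real

section

variable {E : Type*} [NormedAddCommGroup E] [InnerProductSpace ℝ E]

theorem exists_norm_eq_one_inner_eq_norm {K : Submodule ℝ E} (hK : K ≠ ⊥) {c : E}
    (hc : c ∈ K) : ∃ u ∈ K, ‖u‖ = 1 ∧ ⟪u, c⟫ = ‖c‖ := by
  by_cases hc0 : c = 0
  · obtain ⟨w, hwK, hw0⟩ := Submodule.exists_mem_ne_zero_of_ne_bot hK
    exact ⟨‖w‖⁻¹ • w, K.smul_mem _ hwK, norm_smul_inv_norm hw0, by simp [hc0]⟩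
  · refine ⟨‖c‖⁻¹ • c, K.smul_mem _ hc, norm_smul_inv_norm hc0, ?_⟩
    rw [real_inner_smul_left, real_inner_self_eq_norm_sq]
    field_simp [norm_ne_zero_iff.mpr hc0]

theorem norm_add_le_of_ball_inter_subset_closedBall {K : Submodule ℝ E} (hK : K ≠ ⊥) {c : E}
    (hc : c ∈ K) {ρ R : ℝ} (hρ : 0 < ρ) (hball : ∀ y ∈ K, dist y c < ρ → ‖y‖ ≤ R) :
    ‖c‖ + ρ ≤ R := by
  obtain ⟨u, huK, hu, huc⟩ := exists_norm_eq_one_inner_eq_norm hK hc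
  refine le_of_forall_lt_imp_le_of_dense fun s hs => ?_
  set r := max (s - ‖c‖) 0
  have hr : dist (c + r • u) c < ρ := by
    rw [dist_eq_norm, add_sub_cancel_left, norm_smul, hu, mul_one,
      Real.norm_of_nonneg (le_max_right _ _)]
    exact max_lt (by linarith) hρ
  calc s ≤ ‖c‖ + r := by linarith [le_max_left (s - ‖c‖) 0]
    _ = ⟪c + r • u, u⟫ := by
      rw [inner_add_left, real_inner_smul_left, real_inner_self_eq_norm_sq, hu, real_inner_comm,
        huc]
      ring
    _ ≤ ‖c + r • u‖ := by simpa [hu] using real_inner_le_norm (c + r • u) u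
    _ ≤ R := hball _ (K.add_mem hc (K.smul_mem r huK)) hr

/-- A ball of a subspace inside the closed ball of radius `R` that touches the sphere of
radius `R` at `q` is internally tangent there. -/
theorem smul_eq_of_ball_inter_subset_closedBall {K : Submodule ℝ E} {c q : E} (hc : c ∈ K)
    (hq : q ∈ K) {ρ R : ℝ} (hρ : 0 < ρ) (hqR : ‖q‖ = R) (hqc : ‖q - c‖ = ρ)
    (hball : ∀ y ∈ K, dist y c < ρ → ‖y‖ ≤ R) : R • c = (R - ρ) • q := by
  have hK : K ≠ ⊥ := by
    rintro rfl
    rw [(Submodule.mem_bot ℝ).mp hc, (Submodule.mem_bot ℝ).mp hq, sub_zero, norm_zero] at hqc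
    exact hρ.ne hqc
  have hle := norm_add_le_of_ball_inter_subset_closedBall hK hc hρ hball
  have hge : R ≤ ‖c‖ + ρ := by
    simpa [← hqR, ← hqc] using norm_add_le c (q - c)
  have hsame : SameRay ℝ c (q - c) := by
    rw [sameRay_iff_norm_add, add_sub_cancel, hqc, hqR]
    linarith
  have h := hsame.norm_smul_eq
  rw [hqc, show ‖c‖ = R - ρ by linarith] at h
  linear_combination (norm := module) (-1 : ℝ) • h

theorem norm_cos_smul_add_sin_smul {p v : E} (hp : ‖p‖ = 1) (hv : ‖v‖ = 1) (hvp : ⟪v, p⟫ = 0)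
    (t : ℝ) : ‖cos t • p + sin t • v‖ = 1 := by
  have h := norm_add_sq_eq_norm_sq_add_norm_sq_real (x := cos t • p) (y := sin t • v)
    (by rw [real_inner_smul_left, real_inner_smul_right, real_inner_comm, hvp]; ring)
  simp only [norm_smul, hp, hv, Real.norm_eq_abs, mul_one, ← sq, sq_abs, cos_sq_add_sin_sq] at h
  exact (pow_eq_one_iff_of_nonneg (norm_nonneg _) two_ne_zero).mp h

end

section

variable {n : ℕ}

theorem inner_self_coe_sphere (z : Sphere n) : ⟪(z : Eucl n), z⟫ = 1 := by
  rw [real_inner_self_eq_norm_sq, norm_eq_of_mem_sphere, one_pow]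

theorem stereo_of_mem_equator {x₀ p : Sphere n} (hp : p ∈ equator x₀) :
    stereo x₀ p = (2 : ℝ) • (p : Eucl n) := by
  simp [stereo, show ⟪(p : Eucl n), x₀⟫ = 0 from hp]

theorem inner_stereo_left (x₀ z : Sphere n) : ⟪stereo x₀ z, (x₀ : Eucl n)⟫ = 0 := by
  simp [stereo, inner_sub_left, real_inner_smul_left]

theorem norm_stereo_sq_mul {x₀ z : Sphere n} (hz : 1 + ⟪(z : Eucl n), x₀⟫ ≠ 0) :
    ‖stereo x₀ z‖ ^ 2 * (1 + ⟪(z : Eucl n), x₀⟫) = 4 * (1 - ⟪(z : Eucl n), x₀⟫) := by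
  have hxz : ⟪(x₀ : Eucl n), z⟫ = ⟪(z : Eucl n), x₀⟫ := real_inner_comm _ _
  rw [← real_inner_self_eq_norm_sq]
  simp only [stereo, inner_sub_left, inner_sub_right, real_inner_smul_left, real_inner_smul_right,
    inner_self_coe_sphere, hxz]
  field_simp
  ring

theorem norm_stereo_le_two {x₀ z : Sphere n} (hz : z ∈ hemi x₀) : ‖stereo x₀ z‖ ≤ 2 := by
  have hz₀ : 0 ≤ ⟪(z : Eucl n), x₀⟫ := hz
  have h := norm_stereo_sq_mul (x₀ := x₀) (z := z) (by linarith)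
  nlinarith [norm_nonneg (stereo x₀ z)]

theorem stereo_injOn (x₀ : Sphere n) : Set.InjOn (stereo x₀) {z | -1 < ⟪(z : Eucl n), x₀⟫} := by
  intro m (hm : -1 < ⟪(m : Eucl n), x₀⟫) z (hz : -1 < ⟪(z : Eucl n), x₀⟫) hmz
  have hz0 : 1 + ⟪(z : Eucl n), x₀⟫ ≠ 0 := by linarith
  -- `‖stereo x₀ z‖² = 4 (1 - s) / (1 + s)` with `s = ⟪z, x₀⟫` determines `s`
  have hm' := norm_stereo_sq_mul (x₀ := x₀) (z := m) (by linarith)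
  have hz' := norm_stereo_sq_mul hz0
  rw [hmz] at hm'
  have hmx : ⟪(m : Eucl n), x₀⟫ = ⟪(z : Eucl n), x₀⟫ := by
    nlinarith [sq_nonneg ‖stereo x₀ z‖]
  have h := hmz
  simp only [stereo, hmx] at h
  exact Subtype.ext (sub_left_inj.mp (smul_right_injective _ (div_ne_zero two_ne_zero hz0) h))

theorem continuousOn_stereo (x₀ : Sphere n) :
    ContinuousOn (stereo x₀) {z | -1 < ⟪(z : Eucl n), x₀⟫} := by
  have hx₀ : Continuous fun z : Sphere n => ⟪(z : Eucl n), x₀⟫ := by fun_prop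
  refine ContinuousOn.smul (continuousOn_const.div (continuous_const.add hx₀).continuousOn
    fun z (hz : -1 < ⟪(z : Eucl n), x₀⟫) => ne_of_gt (by simp only [Pi.add_apply]; linarith))
    (continuous_subtype_val.sub (hx₀.smul continuous_const)).continuousOn

theorem preimage_ball_subset_interior {x₀ : Sphere n} {M : Set (Sphere n)}
    (hM : M ⊆ {z | -1 < ⟪(z : Eucl n), x₀⟫}) {c : Eucl n} {ρ : ℝ}
    (hball : {y : Eucl n | ⟪y, (x₀ : Eucl n)⟫ = 0 ∧ dist y c < ρ} ⊆ stereo x₀ '' M) :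
    {z : Sphere n | -1 < ⟪(z : Eucl n), x₀⟫} ∩ stereo x₀ ⁻¹' Metric.ball c ρ ⊆ interior M := by
  refine interior_maximal ?_ ((continuousOn_stereo x₀).isOpen_inter_preimage
    (isOpen_lt continuous_const (by fun_prop)) Metric.isOpen_ball)
  rintro z ⟨hz, hzc⟩
  obtain ⟨m, hmM, hmz⟩ := hball ⟨inner_stereo_left x₀ z, hzc⟩
  rwa [← stereo_injOn x₀ (hM hmM) hz hmz]

theorem center_eq_of_ball_subset_stereo_image {x₀ p : Sphere n} {M : Set (Sphere n)}
    (hM : M ⊆ hemi x₀) (hp : p ∈ equator x₀) {c : Eucl n} (hc : ⟪c, (x₀ : Eucl n)⟫ = 0) {ρ : ℝ}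
    (hρ : 0 < ρ) (hball : {y : Eucl n | ⟪y, (x₀ : Eucl n)⟫ = 0 ∧ dist y c < ρ} ⊆ stereo x₀ '' M)
    (htouch : ‖stereo x₀ p - c‖ = ρ) : c = (2 - ρ) • (p : Eucl n) := by
  have hp' : ⟪(p : Eucl n), x₀⟫ = 0 := hp
  have h := smul_eq_of_ball_inter_subset_closedBall (K := (ℝ ∙ (x₀ : Eucl n))ᗮ)
    (q := (2 : ℝ) • (p : Eucl n)) (R := 2)
    (Submodule.mem_orthogonal_singleton_iff_inner_left.mpr hc)
    (Submodule.mem_orthogonal_singleton_iff_inner_left.mpr (by simp [real_inner_smul_left, hp']))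
    hρ (by simp [norm_smul]) (by rwa [stereo_of_mem_equator hp] at htouch)
    fun y hy hyc => by
      obtain ⟨m, hm, rfl⟩ := hball ⟨Submodule.mem_orthogonal_singleton_iff_inner_left.mp hy, hyc⟩
      exact norm_stereo_le_two (hM hm)
  rw [smul_comm] at h
  exact smul_right_injective _ two_ne_zero h

theorem dist_stereo_geodesic_lt {x₀ p z : Sphere n} (hp : p ∈ equator x₀) {v : Eucl n}
    (hv : ‖v‖ = 1) (hvp : ⟪v, (p : Eucl n)⟫ = 0) {t : ℝ}
    (hz : (z : Eucl n) = cos t • (p : Eucl n) + sin t • v) {ρ : ℝ} (hρ : 0 ≤ ρ)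
    (hu : 0 < 1 + sin t * ⟪v, (x₀ : Eucl n)⟫)
    (h : (2 - ρ) * (1 - cos t) < ⟪v, (x₀ : Eucl n)⟫ * ρ * sin t) :
    dist (stereo x₀ z) ((2 - ρ) • (p : Eucl n)) < ρ := by
  have hpx₀ : ⟪(p : Eucl n), x₀⟫ = 0 := hp
  set a := ⟪v, (x₀ : Eucl n)⟫ with ha
  have hzx₀ : ⟪(z : Eucl n), x₀⟫ = sin t * a := by
    simp [hz, inner_add_left, real_inner_smul_left, hpx₀, ha]
  have key : (‖stereo x₀ z - (2 - ρ) • (p : Eucl n)‖ ^ 2 - ρ ^ 2) * (1 + sin t * a)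
      = 4 * ((2 - ρ) * (1 - cos t) - a * ρ * sin t) := by
    rw [← real_inner_self_eq_norm_sq, stereo, hzx₀, hz]
    have hvv : ⟪v, v⟫ = 1 := by rw [real_inner_self_eq_norm_sq, hv, one_pow]
    have hpv : ⟪(p : Eucl n), v⟫ = 0 := by rw [real_inner_comm, hvp]
    have hx₀p : ⟪(x₀ : Eucl n), p⟫ = 0 := by rw [real_inner_comm, hpx₀]
    have hx₀v : ⟪(x₀ : Eucl n), v⟫ = a := real_inner_comm _ _
    simp only [inner_sub_left, inner_sub_right, inner_add_left, inner_add_right,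
      real_inner_smul_left, real_inner_smul_right, inner_self_coe_sphere, hvv, hvp, hpv, hpx₀,
      hx₀p, hx₀v, ← ha]
    field_simp
    linear_combination 4 * sin_sq_add_cos_sq t
  have hsq : ‖stereo x₀ z - (2 - ρ) • (p : Eucl n)‖ ^ 2 < ρ ^ 2 := by
    have hneg : (‖stereo x₀ z - (2 - ρ) • (p : Eucl n)‖ ^ 2 - ρ ^ 2) * (1 + sin t * a) < 0 := by
      rw [key]; linarith
    linarith [neg_of_mul_neg_left hneg hu.le]
  rw [dist_eq_norm]
  exact (pow_lt_pow_iff_left₀ (norm_nonneg _) hρ two_ne_zero).mp hsq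

end

theorem mul_one_sub_cos_lt_mul_sin {b k t : ℝ} (hk : 0 < k) (ht : 0 < t) (ht₁ : t ≤ 1)
    (hbt : b * t ≤ k) : b * (1 - cos t) < k * sin t := by
  have hcos := one_sub_sq_div_two_le_cos (x := t)
  have hsin : t - t ^ 3 / 6 < sin t := sin_gt_sub_cube ht
  have hsin' : t / 2 < sin t := by nlinarith
  rcases le_or_gt b 0 with hb | hb
  · nlinarith [cos_le_one t]
  · calc b * (1 - cos t) ≤ b * t * (t / 2) := by nlinarith
      _ ≤ k * (t / 2) := by gcongr
      _ < k * sin t := by gcongr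

theorem pos_of_forall_mem_Ioo_sin_mul_pos {a t₀ : ℝ} (ht₀ : 0 < t₀)
    (h : ∀ t ∈ Set.Ioo 0 t₀, 0 < sin t * a) : 0 < a := by
  have hmin : 0 < min t₀ 1 := lt_min ht₀ one_pos
  have ht : min t₀ 1 / 2 ∈ Set.Ioo 0 t₀ := ⟨half_pos hmin, by linarith [min_le_left t₀ 1]⟩
  have hsin : 0 < sin (min t₀ 1 / 2) :=
    sin_pos_of_pos_of_lt_pi ht.1 (by linarith [pi_gt_three, min_le_right t₀ 1])
  exact pos_of_mul_pos_right (h _ ht) hsin.le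

theorem geodesic_enters_interior_general (n : ℕ) (x₀ : Sphere n)
    (M : Set (Sphere n)) (hcpt : IsCompact M)
    (hsub : M ⊆ hemi x₀)
    (p : Sphere n) (hp : p ∈ M ∩ equator x₀) (hisc : IntSphereCond x₀ (closure M) p)
    (v : Eucl n) (hv : ‖v‖ = 1) (hvp : ⟪v, (p : Eucl n)⟫ = 0)
    (t₀ : ℝ) (ht₀ : 0 < t₀) (γ : ℝ → Eucl n)
    (hγ : ∀ t : ℝ, γ t = Real.cos t • (p : Eucl n) + Real.sin t • v)
    (hγint : ∀ t ∈ Set.Ioo (0 : ℝ) t₀, 0 < ⟪γ t, (x₀ : Eucl n)⟫) :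
    ∃ δ : ℝ, 0 < δ ∧ δ ≤ t₀ ∧
      ∀ t ∈ Set.Ioo (0 : ℝ) δ, γ t ∈ (fun z : Sphere n => (z : Eucl n)) '' interior M := by
  obtain ⟨c, hcx₀, ρ, hρ, hball, htouch⟩ := hisc
  rw [hcpt.isClosed.closure_eq] at hball
  have hc := center_eq_of_ball_subset_stereo_image hsub hp.2 hcx₀ hρ hball htouch
  set a := ⟪v, (x₀ : Eucl n)⟫
  have hγx₀ : ∀ t, ⟪γ t, (x₀ : Eucl n)⟫ = sin t * a := fun t => by
    simp [hγ, inner_add_left, real_inner_smul_left, show ⟪(p : Eucl n), x₀⟫ = 0 from hp.2, a]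
  have ha : 0 < a := pos_of_forall_mem_Ioo_sin_mul_pos ht₀ fun t ht => hγx₀ t ▸ hγint t ht
  refine ⟨min t₀ (min 1 (a * ρ / 2)), by positivity, min_le_left _ _, fun t ⟨ht, htδ⟩ => ?_⟩
  have ht₁ : t ≤ 1 := htδ.le.trans ((min_le_right _ _).trans (min_le_left _ _))
  have htaρ : t < a * ρ / 2 := htδ.trans_le ((min_le_right _ _).trans (min_le_right _ _))
  let z : Sphere n := ⟨γ t, by
    simpa [hγ] using norm_cos_smul_add_sin_smul (norm_eq_of_mem_sphere p) hv hvp t⟩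
  have hz : 0 < ⟪(z : Eucl n), x₀⟫ := hγint t ⟨ht, htδ.trans_le (min_le_left _ _)⟩
  have hzc : dist (stereo x₀ z) c < ρ := by
    rw [hc]
    exact dist_stereo_geodesic_lt hp.2 hv hvp (hγ t) hρ.le (by linarith [hγx₀ t])
      (mul_one_sub_cos_lt_mul_sin (by positivity) ht ht₁ (by nlinarith))
  refine ⟨z, preimage_ball_subset_interior (fun m hm => ?_) hball ⟨?_, hzc⟩, rfl⟩
  · exact show -1 < ⟪(m : Eucl n), x₀⟫ from neg_one_lt_zero.trans_le (hsub hm)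
  · exact show -1 < ⟪(z : Eucl n), x₀⟫ from neg_one_lt_zero.trans hz

/-- if a weakly convex body in a hemisphere satisfies an interior sphere
condition at `p ∈ M̂ ∩ 𝒮(x₀)` and `γ` is a geodesic starting at `p` entering the open
hemisphere, then `γ(t)` lies in the interior of `M̂` for all small `t > 0`. -/
theorem geodesic_enters_interior (n : ℕ) (hn : 1 ≤ n) (x₀ : Sphere n)
    (M : Set (Sphere n)) (hcpt : IsCompact M) (hint : (interior M).Nonempty)
    (hwc : WeaklyConvexSet M) (hsub : M ⊆ hemi x₀)
    (p : Sphere n) (hp : p ∈ M ∩ equator x₀) (hisc : IntSphereCond x₀ (closure M) p)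
    (v : Eucl n) (hv : ‖v‖ = 1) (hvp : ⟪v, (p : Eucl n)⟫ = 0)
    (t₀ : ℝ) (ht₀ : 0 < t₀) (γ : ℝ → Eucl n)
    (hγ : ∀ t : ℝ, γ t = Real.cos t • (p : Eucl n) + Real.sin t • v)
    (hγint : ∀ t ∈ Set.Ioo (0 : ℝ) t₀, 0 < ⟪γ t, (x₀ : Eucl n)⟫) :
    ∃ δ : ℝ, 0 < δ ∧ δ ≤ t₀ ∧
      ∀ t ∈ Set.Ioo (0 : ℝ) δ, γ t ∈ (fun z : Sphere n => (z : Eucl n)) '' interior M :=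
  geodesic_enters_interior_general n x₀ M hcpt hsub p hp hisc v hv hvp t₀ ht₀ γ hγ hγint
end
end

section
/- Let F : Γ₊ → ℝ be twice continuously differentiable, symmetric, strictly monotone, convex, positively homogeneous of degree 1, with F(1,…,1) > 0. Then for all κ ∈ Γ₊: F(κ) ≥ (F(1,…,1)/n)·∑_{i=1}^n κ_i and ∑_{i=1}^n ∂F/∂κ_i(κ) ≤ F(1,…,1). -/
/-!
Homogeneity and convexity make `F` subadditive, `F (x + y) = 2 F ((x + y) / 2) ≤ F x + F y`.
Averaging the cyclic shifts of `κ` gives the constant vector with entry the mean of `κ`, so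
Jensen's inequality and symmetry bound `F` at that vector, i.e. `(∑ κᵢ / n) F(1,…,1)`, by `F κ`.
For the second inequality, subadditivity gives `F (κ + t•1) ≤ F κ + t F(1,…,1)` for `t > 0`,
and the right derivative at `t = 0` of the left side is `∑ᵢ ∂F/∂κᵢ(κ)`.
-/

noncomputable section

/-- The open positive cone `Γ₊ ⊆ ℝⁿ`. -/
def GammaPlus (n : ℕ) : Set (Fin n → ℝ) := {κ | ∀ i, 0 < κ i}

lemma isOpen_gammaPlus (n : ℕ) : IsOpen (GammaPlus n) := by
  have : GammaPlus n = Set.univ.pi fun _ => Set.Ioi 0 := by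
    ext κ; simp [GammaPlus]
  exact this ▸ isOpen_set_pi Set.finite_univ fun _ _ => isOpen_Ioi

lemma ConvexOn.map_add_le_of_homogeneous {E : Type*} [AddCommGroup E] [Module ℝ E]
    {s : Set E} {F : E → ℝ} (hconv : ConvexOn ℝ s F)
    (hhom : ∀ x ∈ s, ∀ c : ℝ, 0 < c → F (c • x) = c * F x)
    {x y : E} (hx : x ∈ s) (hy : y ∈ s) : F (x + y) ≤ F x + F y := by
  have hmid : (1 / 2 : ℝ) • x + (1 / 2 : ℝ) • y ∈ s :=
    hconv.1 hx hy (by norm_num) (by norm_num) (by norm_num)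
  have hdouble : x + y = (2 : ℝ) • ((1 / 2 : ℝ) • x + (1 / 2 : ℝ) • y) := by
    rw [smul_add, smul_smul, smul_smul]; norm_num
  have hjensen := hconv.2 hx hy (by norm_num : (0 : ℝ) ≤ 1 / 2) (by norm_num : (0 : ℝ) ≤ 1 / 2)
    (by norm_num)
  rw [smul_eq_mul, smul_eq_mul] at hjensen
  rw [hdouble, hhom _ hmid 2 two_pos]
  linarith

/-- Jensen's inequality applied to the average of the cyclic shifts of `κ`. -/
lemma ConvexOn.map_const_mean_le {n : ℕ} [NeZero n] {s : Set (Fin n → ℝ)}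
    {F : (Fin n → ℝ) → ℝ} (hconv : ConvexOn ℝ s F)
    (hs : ∀ π : Equiv.Perm (Fin n), ∀ κ ∈ s, κ ∘ π ∈ s)
    (hsym : ∀ π : Equiv.Perm (Fin n), ∀ κ ∈ s, F (κ ∘ π) = F κ)
    {κ : Fin n → ℝ} (hκ : κ ∈ s) : F (fun _ => (∑ i, κ i) / n) ≤ F κ := by
  have hn : (n : ℝ) ≠ 0 := Nat.cast_ne_zero.2 (NeZero.ne n)
  have haverage : ∑ k : Fin n, (n : ℝ)⁻¹ • (κ ∘ Equiv.addRight k) = fun _ => (∑ i, κ i) / n := by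
    funext j
    have hshift : ∑ k : Fin n, κ (j + k) = ∑ i, κ i :=
      Fintype.sum_equiv (Equiv.addLeft j) _ _ fun _ => rfl
    simp only [Finset.sum_apply, Pi.smul_apply, Function.comp_apply, Equiv.coe_addRight,
      smul_eq_mul, ← Finset.mul_sum, hshift]
    ring
  calc F (fun _ => (∑ i, κ i) / n)
      ≤ ∑ k : Fin n, (n : ℝ)⁻¹ • F (κ ∘ Equiv.addRight k) :=
        haverage ▸ hconv.map_sum_le (fun _ _ => by positivity)
          (by simp [Finset.card_univ, hn]) fun k _ => hs _ κ hκ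
    _ = F κ := by
        simp only [hsym _ κ hκ, Finset.sum_const, Finset.card_univ, Fintype.card_fin, nsmul_eq_mul,
          smul_eq_mul]
        field_simp

lemma HasLineDerivAt.le_of_forall_pos_add_smul_le {E : Type*} [NormedAddCommGroup E]
    [NormedSpace ℝ E] {f : E → ℝ} {f' c : ℝ} {x v : E} (hf : HasLineDerivAt ℝ f f' x v)
    (h : ∀ t : ℝ, 0 < t → f (x + t • v) ≤ f x + t * c) : f' ≤ c := by
  refine le_of_tendsto (HasDerivAt.tendsto_slope_zero_right hf) ?_
  filter_upwards [self_mem_nhdsWithin] with t (ht : 0 < t)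
  rw [zero_add, zero_smul, add_zero, smul_eq_mul, inv_mul_le_iff₀ ht]
  linarith [h t ht]

lemma div_card_mul_sum_le_of_convexOn_gammaPlus {n : ℕ} {F : (Fin n → ℝ) → ℝ}
    (hsym : ∀ π : Equiv.Perm (Fin n), ∀ κ ∈ GammaPlus n, F (κ ∘ π) = F κ)
    (hconv : ConvexOn ℝ (GammaPlus n) F)
    (hhom : ∀ κ ∈ GammaPlus n, ∀ c : ℝ, 0 < c → F (c • κ) = c * F κ)
    {κ : Fin n → ℝ} (hκ : κ ∈ GammaPlus n) : F (fun _ => 1) / n * ∑ i, κ i ≤ F κ := by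
  rcases n.eq_zero_or_pos with rfl | hn
  · -- `Fin 0 → ℝ` is a point, fixed by scaling, so `F` vanishes there
    have hzero : F κ = 0 := by
      have := hhom κ hκ 2 two_pos
      rw [Subsingleton.elim (2 • κ) κ] at this
      linarith
    simp [hzero]
  · have : NeZero n := ⟨hn.ne'⟩
    have hm : 0 < (∑ i, κ i) / n :=
      div_pos (Finset.sum_pos (fun i _ => hκ i) Finset.univ_nonempty) (Nat.cast_pos.2 hn)
    have hconst : (fun _ => (∑ i, κ i) / n : Fin n → ℝ) = ((∑ i, κ i) / n) • fun _ => 1 := by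
      funext; simp
    calc F (fun _ => 1) / n * ∑ i, κ i = F (fun _ => (∑ i, κ i) / n) := by
          rw [hconst, hhom _ (fun _ => one_pos) _ hm]; ring
      _ ≤ F κ := hconv.map_const_mean_le (fun π κ hκ i => hκ (π i)) hsym hκ

lemma sum_fderiv_single_le_of_convexOn_gammaPlus {n : ℕ} {F : (Fin n → ℝ) → ℝ}
    (hdiff : DifferentiableOn ℝ F (GammaPlus n)) (hconv : ConvexOn ℝ (GammaPlus n) F)
    (hhom : ∀ κ ∈ GammaPlus n, ∀ c : ℝ, 0 < c → F (c • κ) = c * F κ)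
    {κ : Fin n → ℝ} (hκ : κ ∈ GammaPlus n) :
    ∑ i, fderiv ℝ F κ (Pi.single i 1) ≤ F (fun _ => 1) := by
  have hone : (fun _ => 1 : Fin n → ℝ) ∈ GammaPlus n := fun _ => one_pos
  rw [← map_sum, Finset.univ_sum_single (fun _ => (1 : ℝ))]
  have hline := ((hdiff κ hκ).differentiableAt ((isOpen_gammaPlus n).mem_nhds hκ)).hasFDerivAt
    |>.hasLineDerivAt (fun _ => 1)
  refine hline.le_of_forall_pos_add_smul_le fun t ht => ?_
  have htone : t • (fun _ => 1 : Fin n → ℝ) ∈ GammaPlus n := fun _ => by simpa using ht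
  rw [← hhom _ hone t ht]
  exact hconv.map_add_le_of_homogeneous hhom hκ htone

theorem convex_curvature_function_inequalities_general (n : ℕ) (F : (Fin n → ℝ) → ℝ)
    (hreg : ContDiffOn ℝ 2 F (GammaPlus n))
    (hsym : ∀ π : Equiv.Perm (Fin n), ∀ κ ∈ GammaPlus n, F (κ ∘ π) = F κ)
    (hconv : ConvexOn ℝ (GammaPlus n) F)
    (hhom : ∀ κ ∈ GammaPlus n, ∀ c : ℝ, 0 < c → F (c • κ) = c * F κ) :
    ∀ κ ∈ GammaPlus n, F (fun _ => 1) / n * ∑ i, κ i ≤ F κ ∧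
      ∑ i, fderiv ℝ F κ (Pi.single i 1) ≤ F (fun _ => 1) := fun _ hκ =>
  ⟨div_card_mul_sum_le_of_convexOn_gammaPlus hsym hconv hhom hκ,
    sum_fderiv_single_le_of_convexOn_gammaPlus (hreg.differentiableOn two_ne_zero) hconv hhom hκ⟩

/-- a symmetric, strictly monotone, convex, 1-homogeneous `C²`
curvature function `F` on `Γ₊` with `F(1,…,1) > 0` satisfies
`F(κ) ≥ (F(1,…,1)/n)·∑ κ_i` and `∑ᵢ ∂F/∂κᵢ(κ) ≤ F(1,…,1)`. -/
theorem convex_curvature_function_inequalities (n : ℕ) (F : (Fin n → ℝ) → ℝ)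
    (hreg : ContDiffOn ℝ 2 F (GammaPlus n))
    (hsym : ∀ π : Equiv.Perm (Fin n), ∀ κ ∈ GammaPlus n, F (κ ∘ π) = F κ)
    (hmono : ∀ κ ∈ GammaPlus n, ∀ i : Fin n, 0 < fderiv ℝ F κ (Pi.single i 1))
    (hconv : ConvexOn ℝ (GammaPlus n) F)
    (hhom : ∀ κ ∈ GammaPlus n, ∀ c : ℝ, 0 < c → F (c • κ) = c * F κ)
    (hpos : 0 < F (fun _ => 1)) :
    ∀ κ ∈ GammaPlus n, F (fun _ => 1) / n * ∑ i, κ i ≤ F κ ∧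
      ∑ i, fderiv ℝ F κ (Pi.single i 1) ≤ F (fun _ => 1) :=
  convex_curvature_function_inequalities_general n F hreg hsym hconv hhom
end
end
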